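/- Let X be a locally path-connected topological space, let π : E → X be a covering map, let U be an open cover of X by path-connected sets, and let (φ_W)_{W ∈ U} be a partition of unity on X subordinate to U: each φ_W : X → [0,1] is continuous, φ_W vanishes outside W, the family of supports of the φ_W is locally finite, and Σ_{W∈U} φ_W(x) = 1 for every x ∈ X. For each pair (W, V) with W ∈ U and V a path component of π⁻¹(W), set ψ_{(W,V)} := Set.indicator V (φ_W ∘ π). Then each ψ_{(W,V)} : E → ℝ is continuous and nonnegative, ψ_{(W,V)} vanishes outside V, for every x̃ ∈ E only finitely many ψ_{(W,V)}(x̃) are nonzero, and Σ_{(W,V)} ψ_{(W,V)}(x̃) = 1 for every x̃ ∈ E. (The lifted family is a partition of unity subordinate to the lifted cover.) -/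

import Mathlib

/-!
A lifted bump `ψ_{(W,V)} = 1_V · (φ_W ∘ π)` is continuous because `E`, being locally homeomorphic
to `X`, is locally path-connected: the path components of the open set `π⁻¹ W` are open, so the
frontier of `V` lies outside `π⁻¹ W`, where `φ_W ∘ π` vanishes. At a point `e`, the pairs `(W, V)`
with `ψ_{(W,V)}(e) ≠ 0` are exactly `(W, pathComponentIn (π⁻¹ W) e)` with `φ_W (π e) ≠ 0`, so the
lifted family at `e` is a reindexing of the family `φ_W (π e)`: finiteness and the sum transfer.
-/

/-- `V` is a path component of `A`: an equivalence class of points of `A` under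
the relation "joined by a path lying inside `A`", regarded as a subset of the
ambient space. -/
def IsPathComponentIn {E : Type*} [TopologicalSpace E] (V A : Set E) : Prop :=
  ∃ x ∈ A, V = pathComponentIn A x

open Set Function

theorem IsLocalHomeomorph.locallyPathConnectedSpace {E X : Type*} [TopologicalSpace E]
    [TopologicalSpace X] [LocallyPathConnectedSpace X] {π : E → X} (hπ : IsLocalHomeomorph π) :
    LocallyPathConnectedSpace E :=
  -- the local inverses of `π` form an atlas modelling `E` on `X`
  letI : ChartedSpace X E :=
    { atlas := range fun x ↦ (hπ x).choose
      chartAt := fun x ↦ (hπ x).choose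
      mem_chart_source := fun x ↦ (hπ x).choose_spec.1
      chart_mem_atlas := fun x ↦ mem_range_self x }
  ChartedSpace.locallyPathConnectedSpace X E

section PathComponentIn

variable {E : Type*} [TopologicalSpace E]

theorem IsPathComponentIn.eq_pathComponentIn {V A : Set E} {x : E} (hV : IsPathComponentIn V A)
    (hx : x ∈ V) : V = pathComponentIn A x := by
  obtain ⟨y, -, rfl⟩ := hV
  exact (pathComponentIn_congr hx).symm

theorem IsOpen.disjoint_frontier_pathComponentIn [LocallyPathConnectedSpace E] {s : Set E}
    (hs : IsOpen s) (x : E) : Disjoint (frontier (pathComponentIn s x)) s := by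
  refine disjoint_left.2 fun a ha has ↦ ha.2 ?_
  rw [(hs.pathComponentIn x).interior_eq]
  obtain ⟨b, hba, hbx⟩ := mem_closure_iff.1 ha.1 _ (hs.pathComponentIn a)
    (mem_pathComponentIn_self has)
  rw [← pathComponentIn_congr hbx, pathComponentIn_congr hba]
  exact mem_pathComponentIn_self has

theorem Continuous.indicator_pathComponentIn [LocallyPathConnectedSpace E] {M : Type*}
    [TopologicalSpace M] [Zero M] {f : E → M} (hf : Continuous f) {s : Set E} (hs : IsOpen s)
    (hfs : ∀ a ∉ s, f a = 0) (x : E) : Continuous ((pathComponentIn s x).indicator f) :=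
  hf.indicator fun a ha ↦ hfs a (disjoint_left.1 (hs.disjoint_frontier_pathComponentIn x) ha)

end PathComponentIn

section Lift

variable {E X M : Type*} [TopologicalSpace E] [Zero M] {π : E → X} {W : Set X} {f : X → M}

theorem indicator_pathComponentIn_preimage_self (hf : ∀ x ∉ W, f x = 0) (e : E) :
    (pathComponentIn (π ⁻¹' W) e).indicator (f ∘ π) e = f (π e) := by
  by_cases he : π e ∈ W
  · exact indicator_of_mem (mem_pathComponentIn_self (mem_preimage.2 he)) _
  · rw [hf _ he]
    exact indicator_of_notMem (fun h ↦ he (pathComponentIn_subset h : e ∈ π ⁻¹' W)) _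

theorem IsPathComponentIn.indicator_comp_ne_zero_iff {V : Set E} (hf : ∀ x ∉ W, f x = 0)
    (hV : IsPathComponentIn V (π ⁻¹' W)) {e : E} :
    V.indicator (f ∘ π) e ≠ 0 ↔ V = pathComponentIn (π ⁻¹' W) e ∧ f (π e) ≠ 0 := by
  constructor
  · intro h
    have he : e ∈ V := mem_of_indicator_ne_zero h
    exact ⟨hV.eq_pathComponentIn he, by rwa [indicator_of_mem he] at h⟩
  · rintro ⟨rfl, h⟩
    rwa [indicator_pathComponentIn_preimage_self hf]

end Lift

def liftedCover {E X : Type*} [TopologicalSpace E] (π : E → X) (U : Set (Set X)) :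
    Set (Set X × Set E) :=
  {p | p.1 ∈ U ∧ IsPathComponentIn p.2 (π ⁻¹' p.1)}

section LiftedCover

variable {E X M : Type*} [TopologicalSpace E] {π : E → X} {U : Set (Set X)}

theorem setOf_mem_liftedCover_indicator_ne_zero [Zero M] {φ : Set X → X → M}
    (hφ : ∀ W ∈ U, ∀ x ∉ W, φ W x = 0) (e : E) :
    {p | p ∈ liftedCover π U ∧ p.2.indicator (φ p.1 ∘ π) e ≠ 0} =
      (fun W ↦ (W, pathComponentIn (π ⁻¹' W) e)) '' {W | W ∈ U ∧ φ W (π e) ≠ 0} := by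
  ext ⟨W, V⟩
  simp only [liftedCover, mem_ofPred_eq, mem_image, Prod.mk.injEq]
  constructor
  · rintro ⟨⟨hW, hV⟩, h⟩
    obtain ⟨rfl, hne⟩ := (hV.indicator_comp_ne_zero_iff (hφ W hW)).1 h
    exact ⟨W, ⟨hW, hne⟩, rfl, rfl⟩
  · rintro ⟨W, ⟨hW, h⟩, rfl, rfl⟩
    have he : π e ∈ W := by_contra fun he ↦ h (hφ W hW _ he)
    refine ⟨⟨hW, e, he, rfl⟩, ?_⟩
    rwa [indicator_pathComponentIn_preimage_self (hφ W hW)]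

theorem finsum_mem_liftedCover_indicator [AddCommMonoid M] {φ : Set X → X → M}
    (hφ : ∀ W ∈ U, ∀ x ∉ W, φ W x = 0) (e : E) :
    ∑ᶠ p ∈ liftedCover π U, p.2.indicator (φ p.1 ∘ π) e = ∑ᶠ W ∈ U, φ W (π e) := by
  rw [← finsum_mem_inter_support, ← finsum_mem_inter_support (s := U)]
  simp only [inter_def, mem_support]
  rw [setOf_mem_liftedCover_indicator_ne_zero hφ,
    finsum_mem_image fun _ _ _ _ h ↦ congrArg Prod.fst h]
  exact finsum_mem_congr rfl fun W hW ↦ indicator_pathComponentIn_preimage_self (hφ W hW.1) e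

end LiftedCover

theorem stmt8_general {E X : Type*} [TopologicalSpace E] [TopologicalSpace X]
    [LocallyPathConnectedSpace X] (π : E → X) (hπ : IsCoveringMap π)
    (U : Set (Set X)) (hUopen : ∀ W ∈ U, IsOpen W)
    (φ : Set X → X → ℝ)
    (hcont : ∀ W ∈ U, Continuous (φ W))
    (hrange : ∀ W ∈ U, ∀ x : X, 0 ≤ φ W x ∧ φ W x ≤ 1)
    (hsupp : ∀ W ∈ U, ∀ x ∉ W, φ W x = 0)
    (hfin : ∀ x : X, {W | W ∈ U ∧ φ W x ≠ 0}.Finite)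
    (hsum : ∀ x : X, ∑ᶠ W ∈ U, φ W x = 1)
    (P : Set (Set X × Set E))
    (hP : P = {p | p.1 ∈ U ∧ IsPathComponentIn p.2 (π ⁻¹' p.1)})
    (ψ : Set X × Set E → E → ℝ)
    (hψ : ∀ p, ψ p = Set.indicator p.2 (φ p.1 ∘ π)) :
    (∀ p ∈ P, Continuous (ψ p)) ∧
    (∀ p ∈ P, ∀ xt : E, 0 ≤ ψ p xt) ∧
    (∀ p ∈ P, ∀ xt ∉ p.2, ψ p xt = 0) ∧
    (∀ xt : E, {p | p ∈ P ∧ ψ p xt ≠ 0}.Finite) ∧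
    (∀ xt : E, ∑ᶠ p ∈ P, ψ p xt = 1) := by
  obtain rfl : ψ = fun p ↦ p.2.indicator (φ p.1 ∘ π) := funext hψ
  obtain rfl : P = liftedCover π U := hP
  have := hπ.isLocalHomeomorph.locallyPathConnectedSpace
  refine ⟨?_, ?_, fun p _ e he ↦ indicator_of_notMem he _, fun e ↦ ?_, fun e ↦ ?_⟩
  · rintro ⟨W, V⟩ ⟨hW : W ∈ U, y, -, rfl : V = pathComponentIn (π ⁻¹' W) y⟩
    exact ((hcont W hW).comp hπ.continuous).indicator_pathComponentIn
      ((hUopen W hW).preimage hπ.continuous) (fun a ha ↦ hsupp W hW _ ha) y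
  · rintro p ⟨hW, -⟩ e
    exact indicator_nonneg (fun a _ ↦ (hrange _ hW (π a)).1) e
  · rw [setOf_mem_liftedCover_indicator_ne_zero hsupp]
    exact (hfin (π e)).image _
  · rw [finsum_mem_liftedCover_indicator hsupp, hsum]

theorem stmt8 {E X : Type*} [TopologicalSpace E] [TopologicalSpace X]
    [LocallyPathConnectedSpace X] (π : E → X) (hπ : IsCoveringMap π)
    (U : Set (Set X)) (hUopen : ∀ W ∈ U, IsOpen W)
    (hUpc : ∀ W ∈ U, IsPathConnected W)
    (hUcov : ∀ x : X, ∃ W ∈ U, x ∈ W)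
    (φ : Set X → X → ℝ)
    (hcont : ∀ W ∈ U, Continuous (φ W))
    (hrange : ∀ W ∈ U, ∀ x : X, 0 ≤ φ W x ∧ φ W x ≤ 1)
    (hsupp : ∀ W ∈ U, ∀ x ∉ W, φ W x = 0)
    (hlf : LocallyFinite (fun W : U => Function.support (φ W)))
    (hfin : ∀ x : X, {W | W ∈ U ∧ φ W x ≠ 0}.Finite)
    (hsum : ∀ x : X, ∑ᶠ W ∈ U, φ W x = 1)
    (P : Set (Set X × Set E))
    (hP : P = {p | p.1 ∈ U ∧ IsPathComponentIn p.2 (π ⁻¹' p.1)})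
    (ψ : Set X × Set E → E → ℝ)
    (hψ : ∀ p, ψ p = Set.indicator p.2 (φ p.1 ∘ π)) :
    (∀ p ∈ P, Continuous (ψ p)) ∧
    (∀ p ∈ P, ∀ xt : E, 0 ≤ ψ p xt) ∧
    (∀ p ∈ P, ∀ xt ∉ p.2, ψ p xt = 0) ∧
    (∀ xt : E, {p | p ∈ P ∧ ψ p xt ≠ 0}.Finite) ∧
    (∀ xt : E, ∑ᶠ p ∈ P, ψ p xt = 1) :=
  stmt8_general π hπ U hUopen φ hcont hrange hsupp hfin hsum P hP ψ hψ
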